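/- arXiv:2401.03366 — 2 statements merged into one kernel-verified Lean document; each statement's English description precedes it below -/
import Mathlib

section
/- Let Q be an involutive quantale and let p, q be hermitian elements (p° = p, q° = q). If d ∈ Q satisfies d ≤ p ∧ q and (d / p) & p = d = q & (q \ d), and e satisfies the analogous conditions for q, r, then the two expressions (e / q) & d and e & (q \ d) defining the composite e ∘ d in D*(Q) are equal. -/
/-- The left implication `r / q = ⋁ {s | s * q ≤ r}` in a quantale. -/
def qLimp {Q : Type*} [Monoid Q] [CompleteLattice Q] (r q : Q) : Q :=
  sSup {s : Q | s * q ≤ r}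

/-- The right implication `p \ r = ⋁ {s | p * s ≤ r}` in a quantale. -/
def qRimp {Q : Type*} [Monoid Q] [CompleteLattice Q] (p r : Q) : Q :=
  sSup {s : Q | p * s ≤ r}

/-- in an involutive quantale, for hermitian `p q r` and
`d ∈ D*(Q)(p,q)`, `e ∈ D*(Q)(q,r)`, the two formulas `(e / q) & d` and
`e & (q \ d)` for the composite `e ∘ d` agree. -/
theorem Dstar_comp_two_formulas_agree
    {Q : Type*} [Monoid Q] [CompleteLattice Q] [IsQuantale Q]
    (inv : Q → Q)
    (inv_inv : ∀ q : Q, inv (inv q) = q)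
    (inv_mul : ∀ p q : Q, inv (p * q) = inv q * inv p)
    (inv_sSup : ∀ S : Set Q, inv (sSup S) = ⨆ q ∈ S, inv q)
    (p q r d e : Q)
    (hp : inv p = p) (hq : inv q = q) (hr : inv r = r)
    (hd1 : d ≤ p ⊓ q) (hd2 : qLimp d p * p = d) (hd3 : q * qRimp q d = d)
    (he1 : e ≤ q ⊓ r) (he2 : qLimp e q * q = e) (he3 : r * qRimp r e = e) :
    qLimp e q * d = e * qRimp q d := by
  conv_lhs => rw [← hd3, ← mul_assoc, he2]
end

section
/- Let Q be an involutive quantale and p, q, r hermitian elements. If d ∈ D*(Q)(p,q) and e ∈ D*(Q)(q,r), then the composite e ∘ d := (e / q) & d belongs to D*(Q)(p,r); moreover the identity q ∈ D*(Q)(q,q) acts as a two-sided unit for this composition, so that D*(Q) is a category. -/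
/-- Membership in the hom-set `D*(Q)(p,q)` of the quantaloid `D*(Q)`. -/
def Dmem {Q : Type*} [Monoid Q] [CompleteLattice Q] (p q d : Q) : Prop :=
  d ≤ p ⊓ q ∧ qLimp d p * p = d ∧ q * qRimp q d = d

/-- Composition `e ∘ d := (e / q) & d` in `D*(Q)`. -/
def Dcomp {Q : Type*} [Monoid Q] [CompleteLattice Q] (q e d : Q) : Q :=
  qLimp e q * d

section lemmas

variable {Q : Type*} [Monoid Q] [CompleteLattice Q] [IsQuantale Q]

lemma qLimp_mul_le (r q : Q) : qLimp r q * q ≤ r := by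
  rw [qLimp, sSup_mul_distrib]
  exact iSup_le fun s => iSup_le fun hs => hs

lemma mul_qRimp_le (p r : Q) : p * qRimp p r ≤ r := by
  rw [qRimp, mul_sSup_distrib]
  exact iSup_le fun s => iSup_le fun hs => hs

lemma le_qLimp {x r q : Q} (h : x * q ≤ r) : x ≤ qLimp r q := le_sSup h

lemma le_qRimp {x p r : Q} (h : p * x ≤ r) : x ≤ qRimp p r := le_sSup h

/-- key exchange: `(e/q)*d = e*(q\d)` when `(e/q)*q = e` and `q*(q\d) = d`. -/
lemma key_exchange {q d e : Q} (hd : q * qRimp q d = d) (he : qLimp e q * q = e) :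
    qLimp e q * d = e * qRimp q d := by
  conv_lhs => rw [← hd]
  rw [← mul_assoc, he]

end lemmas

/-- for hermitian `p q r s` in an involutive quantale, the composite of
`d ∈ D*(Q)(p,q)` and `e ∈ D*(Q)(q,r)` lies in `D*(Q)(p,r)`, the hermitian element `q`
itself is an identity morphism and acts as a two-sided unit, and composition is
associative, so that `D*(Q)` is a category. -/
theorem Dstar_is_category
    {Q : Type*} [Monoid Q] [CompleteLattice Q] [IsQuantale Q]
    (inv : Q → Q)
    (inv_inv : ∀ q : Q, inv (inv q) = q)
    (inv_mul : ∀ p q : Q, inv (p * q) = inv q * inv p)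
    (inv_sSup : ∀ S : Set Q, inv (sSup S) = ⨆ q ∈ S, inv q)
    (p q r s d e f : Q)
    (hp : inv p = p) (hq : inv q = q) (hr : inv r = r) (hs : inv s = s)
    (hd : Dmem p q d) (he : Dmem q r e) (hf : Dmem r s f) :
    Dmem p r (Dcomp q e d) ∧
    Dmem q q q ∧
    Dcomp p d p = d ∧
    Dcomp q q d = d ∧
    Dcomp q (Dcomp r f e) d = Dcomp r f (Dcomp q e d) := by
  obtain ⟨hd1, hd2, hd3⟩ := hd
  obtain ⟨he1, he2, he3⟩ := he
  obtain ⟨hf1, hf2, hf3⟩ := hf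
  have hdp : d ≤ p := hd1.trans inf_le_left
  have hdq : d ≤ q := hd1.trans inf_le_right
  have heq : e ≤ q := he1.trans inf_le_left
  have her : e ≤ r := he1.trans inf_le_right
  have hfr : f ≤ r := hf1.trans inf_le_left
  have hex : qLimp e q * d = e * qRimp q d := key_exchange hd3 he2
  refine ⟨⟨?_, ?_, ?_⟩, ⟨?_, ?_, ?_⟩, ?_, ?_, ?_⟩
  · -- e∘d ≤ p ⊓ r
    refine le_inf ?_ ?_
    · -- (e/q)*d = e*(q\d) ≤ q*(q\d) = d ≤ p
      rw [Dcomp, hex]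
      calc e * qRimp q d ≤ q * qRimp q d := mul_le_mul_left heq _
        _ = d := hd3
        _ ≤ p := hdp
    · -- (e/q)*d ≤ (e/q)*q = e ≤ r
      rw [Dcomp]
      calc qLimp e q * d ≤ qLimp e q * q := mul_le_mul_right hdq _
        _ = e := he2
        _ ≤ r := her
  · -- ((e∘d)/p)*p = e∘d
    refine le_antisymm (qLimp_mul_le _ _) ?_
    have hkey : (qLimp e q * qLimp d p) * p = Dcomp q e d := by
      rw [mul_assoc, hd2, Dcomp]
    calc Dcomp q e d = (qLimp e q * qLimp d p) * p := hkey.symm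
      _ ≤ qLimp (Dcomp q e d) p * p :=
        mul_le_mul_left (le_qLimp (le_of_eq hkey)) _
  · -- r*(r\(e∘d)) = e∘d
    refine le_antisymm (mul_qRimp_le _ _) ?_
    have hkey : r * (qRimp r e * qRimp q d) = Dcomp q e d := by
      rw [← mul_assoc, he3, Dcomp, hex]
    calc Dcomp q e d = r * (qRimp r e * qRimp q d) := hkey.symm
      _ ≤ r * qRimp r (Dcomp q e d) :=
        mul_le_mul_right (le_qRimp (le_of_eq hkey)) _
  · exact le_inf le_rfl le_rfl
  · -- (q/q)*q = q
    refine le_antisymm (qLimp_mul_le _ _) ?_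
    calc q = 1 * q := (one_mul q).symm
      _ ≤ qLimp q q * q := mul_le_mul_left (le_qLimp (by rw [one_mul])) _
  · refine le_antisymm (mul_qRimp_le _ _) ?_
    calc q = q * 1 := (mul_one q).symm
      _ ≤ q * qRimp q q := mul_le_mul_right (le_qRimp (by rw [mul_one])) _
  · exact hd2
  · -- (q/q)*d = d
    refine le_antisymm ?_ ?_
    · calc qLimp q q * d = qLimp q q * (q * qRimp q d) := by rw [hd3]
        _ = (qLimp q q * q) * qRimp q d := (mul_assoc _ _ _).symm
        _ ≤ q * qRimp q d := mul_le_mul_left (qLimp_mul_le _ _) _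
        _ = d := hd3
    · calc d = 1 * d := (one_mul d).symm
        _ ≤ qLimp q q * d := mul_le_mul_left (le_qLimp (by rw [one_mul])) _
  · -- associativity
    have hfg : (qLimp f r * qLimp e q) * q = qLimp f r * e := by
      rw [mul_assoc, he2]
    refine le_antisymm ?_ ?_
    · -- ((f∘e)/q)*d ≤ (f/r)*(e∘d)
      calc qLimp (Dcomp r f e) q * d
          = qLimp (Dcomp r f e) q * (q * qRimp q d) := by rw [hd3]
        _ = (qLimp (Dcomp r f e) q * q) * qRimp q d := (mul_assoc _ _ _).symm
        _ ≤ Dcomp r f e * qRimp q d := mul_le_mul_left (qLimp_mul_le _ _) _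
        _ = qLimp f r * (e * qRimp q d) := by rw [Dcomp, mul_assoc]
        _ = qLimp f r * (qLimp e q * d) := by rw [← hex]
    · -- (f/r)*((e/q)*d) ≤ ((f∘e)/q)*d
      calc qLimp f r * (qLimp e q * d)
          = (qLimp f r * qLimp e q) * d := (mul_assoc _ _ _).symm
        _ ≤ qLimp (Dcomp r f e) q * d :=
            mul_le_mul_left (le_qLimp (by rw [hfg, Dcomp])) _
end
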